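/- arXiv:2010.14663 — 2 statements merged into one kernel-verified Lean document; each statement's English description precedes it below -/
import Mathlib

section
/- Let k ≥ 2. Then the limit L_k = lim_{n→∞} M_k(n)/k^{2n} exists, and for every n ≥ 1 it satisfies (Σ_{i=1}^{n} u_i·k^{−2i})^2 ≤ L_k ≤ ((Σ_{i=1}^{n} u_i·k^{−2i}) + k^{−n}/(k−1))^2. -/
/-!
The shortest right-border of a pair `(u, v)` is unbordered, and conversely an unbordered
right-border is the shortest one; the same holds for left-borders. Sort the mutually bordered
pairs of length `m` by the lengths `(i, j)` of their shortest right-border `b` and left-border `c`.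
If `i + j ≤ m` the two borders do not overlap, so `u = c x b` and `v = b y c` with `x`, `y`
arbitrary: there are `u_i u_j k^(2(m-i-j))` such pairs. If `i + j > m`, then `v` is determined
by `u`, so there are at most `k^m` of them. Writing `S_n = ∑_{i ≤ n} u_i k^(-2i)`, this gives
`S_(m/2)² ≤ M_k(m) / k^(2m) ≤ S_m² + m² k^(-m)`, hence `M_k(m) / k^(2m) → S²` with
`S = lim S_n`, and `S_n ≤ S ≤ S_n + ∑_{i > n} k^(-i)` because `u_i ≤ k^i`.
-/

open Classical Finset Filter

/-- A border of `w`: a non-empty word that is both a proper prefix and a suffix of `w`. -/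
def IsBorder {k : ℕ} (w b : List (Fin k)) : Prop :=
  b ≠ [] ∧ b ≠ w ∧ b <+: w ∧ b <:+ w

/-- A word is unbordered if it has no border. -/
def Unbordered {k : ℕ} (w : List (Fin k)) : Prop :=
  ∀ b, ¬ IsBorder w b

/-- A right-border of `(u,v)`: a non-empty proper suffix of `u` that is a proper prefix of `v`. -/
def IsRightBorder {k : ℕ} (u v b : List (Fin k)) : Prop :=
  b ≠ [] ∧ b <:+ u ∧ b ≠ u ∧ b <+: v ∧ b ≠ v

/-- A left-border of `(u,v)`: a non-empty proper prefix of `u` that is a proper suffix of `v`. -/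
def IsLeftBorder {k : ℕ} (u v b : List (Fin k)) : Prop :=
  b ≠ [] ∧ b <+: u ∧ b ≠ u ∧ b <:+ v ∧ b ≠ v

def MutuallyBordered {k : ℕ} (u v : List (Fin k)) : Prop :=
  (∃ b, IsRightBorder u v b) ∧ (∃ b, IsLeftBorder u v b)

def MutuallyUnbordered {k : ℕ} (u v : List (Fin k)) : Prop :=
  (¬ ∃ b, IsRightBorder u v b) ∧ (¬ ∃ b, IsLeftBorder u v b)

def RightBordered {k : ℕ} (u v : List (Fin k)) : Prop :=
  (∃ b, IsRightBorder u v b) ∧ (¬ ∃ b, IsLeftBorder u v b)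

/-- `lso u v`: the length of the shortest right-border of `(u,v)`, or `0` if there is none. -/
noncomputable def lso {k : ℕ} (u v : List (Fin k)) : ℕ :=
  sInf {m | ∃ b : List (Fin k), IsRightBorder u v b ∧ b.length = m}

def IsShortestRightBorder {k : ℕ} (u v b : List (Fin k)) : Prop :=
  IsRightBorder u v b ∧ ∀ b', IsRightBorder u v b' → b.length ≤ b'.length

def IsShortestLeftBorder {k : ℕ} (u v b : List (Fin k)) : Prop :=
  IsLeftBorder u v b ∧ ∀ b', IsLeftBorder u v b' → b.length ≤ b'.length

/-- The finite set of all length-`n` words over `Σ_k`. -/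
def Words (k n : ℕ) : Finset (List (Fin k)) :=
  (Finset.univ : Finset (Fin n → Fin k)).image List.ofFn

/-- `UB k n`: the number of unbordered words of length `n` over `Σ_k`. -/
noncomputable def UB (k n : ℕ) : ℕ :=
  ((Words k n).filter Unbordered).card

/-- `M k n`: the number of mutually bordered pairs of length-`n` words over `Σ_k`. -/
noncomputable def M (k n : ℕ) : ℕ :=
  ((Words k n ×ˢ Words k n).filter (fun p => MutuallyBordered p.1 p.2)).card

/-- `R k n`: the number of right-bordered pairs of length-`n` words over `Σ_k`. -/
noncomputable def R (k n : ℕ) : ℕ :=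
  ((Words k n ×ˢ Words k n).filter (fun p => RightBordered p.1 p.2)).card

/-- `U k n`: the number of mutually unbordered pairs of length-`n` words over `Σ_k`. -/
noncomputable def U (k n : ℕ) : ℕ :=
  ((Words k n ×ˢ Words k n).filter (fun p => MutuallyUnbordered p.1 p.2)).card

/-- `G u v m`: the number of unbordered words of length `m` over `Σ_k` having
`u` as a prefix and `v` as a suffix. -/
noncomputable def G {k : ℕ} (u v : List (Fin k)) (m : ℕ) : ℕ :=
  ((Words k m).filter (fun w => Unbordered w ∧ u <+: w ∧ v <:+ w)).card

open Topology

section Words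

variable {k : ℕ}

lemma mem_Words {n : ℕ} {w : List (Fin k)} : w ∈ Words k n ↔ w.length = n := by
  simp only [Words, mem_image, mem_univ, true_and]
  constructor
  · rintro ⟨f, rfl⟩
    exact List.length_ofFn
  · rintro rfl
    exact ⟨w.get, List.ofFn_get w⟩

lemma card_Words (k n : ℕ) : #(Words k n) = k ^ n := by
  rw [Words, card_image_of_injective _ List.ofFn_injective, card_univ, Fintype.card_fun,
    Fintype.card_fin, Fintype.card_fin]

lemma UB_le_pow (k n : ℕ) : UB k n ≤ k ^ n :=
  (card_filter_le _ _).trans_eq (card_Words k n)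

end Words

lemma List.exists_eq_append_append {α : Type*} {u b c : List α} (hc : c <+: u) (hb : b <:+ u)
    (h : c.length + b.length ≤ u.length) : ∃ x, u = c ++ x ++ b := by
  obtain ⟨t, rfl⟩ := hc
  obtain ⟨x, rfl⟩ := List.suffix_of_suffix_length_le hb (List.suffix_append c t)
    (by simp only [List.length_append] at h; omega)
  exact ⟨x, (List.append_assoc _ _ _).symm⟩

section Borders

variable {k : ℕ}

lemma IsBorder.length_lt {w b : List (Fin k)} (h : IsBorder w b) : b.length < w.length :=
  h.2.2.1.length_le.lt_of_ne (mt h.2.2.1.eq_of_length h.2.1)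

lemma isLeftBorder_iff_isRightBorder {u v b : List (Fin k)} :
    IsLeftBorder u v b ↔ IsRightBorder v u b := by
  unfold IsLeftBorder IsRightBorder
  tauto

lemma IsRightBorder.of_isBorder {u v b d : List (Fin k)} (hb : IsRightBorder u v b)
    (hd : IsBorder b d) : IsRightBorder u v d := by
  obtain ⟨-, hbu, -, hbv, -⟩ := hb
  have hlt := hd.length_lt
  refine ⟨hd.1, hd.2.2.2.trans hbu, ?_, hd.2.2.1.trans hbv, ?_⟩ <;> rintro rfl
  · exact absurd hbu.length_le (by omega)
  · exact absurd hbv.length_le (by omega)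

lemma IsRightBorder.isBorder_of_length_lt {u v b d : List (Fin k)} (hb : IsRightBorder u v b)
    (hd : IsRightBorder u v d) (hlt : d.length < b.length) : IsBorder b d :=
  ⟨hd.1, by rintro rfl; exact lt_irrefl _ hlt,
    List.prefix_of_prefix_length_le hd.2.2.2.1 hb.2.2.2.1 hlt.le,
    List.suffix_of_suffix_length_le hd.2.1 hb.2.1 hlt.le⟩

lemma exists_isRightBorder_unbordered_length_eq_lso {u v : List (Fin k)}
    (h : ∃ b, IsRightBorder u v b) :
    ∃ b, IsRightBorder u v b ∧ Unbordered b ∧ b.length = lso u v := by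
  obtain ⟨b₀, hb₀⟩ := h
  obtain ⟨b, hb, hlen⟩ := Nat.sInf_mem (⟨b₀.length, b₀, hb₀, rfl⟩ :
    {m | ∃ b : List (Fin k), IsRightBorder u v b ∧ b.length = m}.Nonempty)
  refine ⟨b, hb, fun d hd => ?_, hlen⟩
  have hle : lso u v ≤ d.length := Nat.sInf_le ⟨d, hb.of_isBorder hd, rfl⟩
  have hlt := hd.length_lt
  rw [lso] at hle
  omega

lemma lso_eq_length_of_unbordered {u v b : List (Fin k)} (hb : IsRightBorder u v b)
    (hub : Unbordered b) : lso u v = b.length := by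
  obtain ⟨b₀, hb₀, -, hlen⟩ := exists_isRightBorder_unbordered_length_eq_lso ⟨b, hb⟩
  have hle : lso u v ≤ b.length := Nat.sInf_le ⟨b, hb, rfl⟩
  by_contra hne
  exact hub b₀ (hb.isBorder_of_length_lt hb₀ (by omega))

lemma isRightBorder_append_append {b c : List (Fin k)} (hb : b ≠ []) (hc : c ≠ [])
    (x y : List (Fin k)) : IsRightBorder (c ++ x ++ b) (b ++ y ++ c) b := by
  have hc' := List.length_pos_of_ne_nil hc
  refine ⟨hb, List.suffix_append _ _, fun h => ?_,
    (List.prefix_append b y).trans (List.prefix_append _ c), fun h => ?_⟩ <;>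
  · have := congrArg List.length h
    simp only [List.length_append] at this
    omega

end Borders

section Fibers

variable {k : ℕ}

noncomputable def lsoFiber (k m i j : ℕ) : Finset (List (Fin k) × List (Fin k)) :=
  {p ∈ (Words k m ×ˢ Words k m).filter (fun p => MutuallyBordered p.1 p.2) |
    (lso p.1 p.2, lso p.2 p.1) = (i, j)}

lemma mem_lsoFiber {m i j : ℕ} {u v : List (Fin k)} :
    (u, v) ∈ lsoFiber k m i j ↔ u.length = m ∧ v.length = m ∧
      ∃ b c, IsRightBorder u v b ∧ Unbordered b ∧ b.length = i ∧
        IsRightBorder v u c ∧ Unbordered c ∧ c.length = j := by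
  simp only [lsoFiber, mem_filter, mem_product, mem_Words, Prod.mk.injEq, MutuallyBordered,
    isLeftBorder_iff_isRightBorder]
  constructor
  · rintro ⟨⟨⟨hu, hv⟩, hr, hl⟩, rfl, rfl⟩
    obtain ⟨b, hb, hub, hbl⟩ := exists_isRightBorder_unbordered_length_eq_lso hr
    obtain ⟨c, hc, huc, hcl⟩ := exists_isRightBorder_unbordered_length_eq_lso hl
    exact ⟨hu, hv, b, c, hb, hub, hbl, hc, huc, hcl⟩
  · rintro ⟨hu, hv, b, c, hb, hub, rfl, hc, huc, rfl⟩
    exact ⟨⟨⟨hu, hv⟩, ⟨b, hb⟩, ⟨c, hc⟩⟩, lso_eq_length_of_unbordered hb hub,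
      lso_eq_length_of_unbordered hc huc⟩

lemma lsoFiber_eq_image {m i j : ℕ} (hi : 1 ≤ i) (hj : 1 ≤ j) (hij : i + j ≤ m) :
    lsoFiber k m i j =
      ((((Words k i).filter Unbordered ×ˢ (Words k j).filter Unbordered) ×ˢ
        (Words k (m - i - j) ×ˢ Words k (m - i - j))).image
          fun q => (q.1.2 ++ q.2.1 ++ q.1.1, q.1.1 ++ q.2.2 ++ q.1.2)) := by
  ext ⟨u, v⟩
  simp only [mem_image, mem_product, mem_filter, mem_Words, Prod.exists, Prod.mk.injEq]
  rw [mem_lsoFiber]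
  constructor
  · rintro ⟨hu, hv, b, c, hb, hub, rfl, hc, huc, rfl⟩
    obtain ⟨x, rfl⟩ := List.exists_eq_append_append hc.2.2.2.1 hb.2.1 (by omega)
    obtain ⟨y, rfl⟩ := List.exists_eq_append_append hb.2.2.2.1 hc.2.1 (by omega)
    simp only [List.length_append] at hu hv
    exact ⟨b, c, x, y, ⟨⟨⟨rfl, hub⟩, rfl, huc⟩, by omega, by omega⟩, rfl, rfl⟩
  · rintro ⟨b, c, x, y, ⟨⟨⟨hbl, hub⟩, hcl, huc⟩, hxl, hyl⟩, rfl, rfl⟩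
    have hb : b ≠ [] := List.ne_nil_of_length_pos (by omega)
    have hc : c ≠ [] := List.ne_nil_of_length_pos (by omega)
    simp only [List.length_append]
    exact ⟨by omega, by omega, b, c, isRightBorder_append_append hb hc x y, hub, hbl,
      isRightBorder_append_append hc hb y x, huc, hcl⟩

lemma card_lsoFiber {m i j : ℕ} (hi : 1 ≤ i) (hj : 1 ≤ j) (hij : i + j ≤ m) :
    #(lsoFiber k m i j) = UB k i * UB k j * (k ^ (m - i - j) * k ^ (m - i - j)) := by
  rw [lsoFiber_eq_image hi hj hij, card_image_of_injOn, card_product, card_product, card_product,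
    card_Words, UB, UB]
  rintro ⟨⟨b, c⟩, x, y⟩ h ⟨⟨b', c'⟩, x', y'⟩ h' he
  simp only [mem_coe, mem_product, mem_filter, mem_Words] at h h'
  simp only [Prod.mk.injEq] at he
  obtain ⟨hcx, rfl⟩ := List.append_inj he.1 (by simp; omega)
  obtain ⟨rfl, rfl⟩ := List.append_inj hcx (by omega)
  simpa using he.2

lemma snd_eq_of_mem_lsoFiber {m i j : ℕ} {u v : List (Fin k)} (hp : (u, v) ∈ lsoFiber k m i j)
    (hij : m ≤ i + j) : v = u.drop (m - i) ++ (u.take j).drop (i + j - m) := by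
  obtain ⟨rfl, hv, b, c, hb, -, rfl, hc, -, rfl⟩ := mem_lsoFiber.1 hp
  have hbu := hb.2.1.length_le
  have hsuf : v.drop b.length <:+ c :=
    List.suffix_of_suffix_length_le (List.drop_suffix _ _) hc.2.1 (by simp; omega)
  rw [← List.suffix_iff_eq_drop.1 hb.2.1, ← List.prefix_iff_eq_take.1 hc.2.2.2.1]
  conv_lhs => rw [← List.take_append_drop b.length v, ← List.prefix_iff_eq_take.1 hb.2.2.2.1,
    List.suffix_iff_eq_drop.1 hsuf]
  simp only [List.length_drop, hv]
  congr 2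
  omega

lemma card_lsoFiber_le {m i j : ℕ} (hij : m ≤ i + j) : #(lsoFiber k m i j) ≤ k ^ m := by
  rw [← card_Words k m]
  refine card_le_card_of_injOn Prod.fst (fun p hp => ?_) ?_
  · exact mem_Words.2 (mem_lsoFiber.1 hp).1
  · rintro ⟨u, v⟩ hp ⟨u', v'⟩ hp' (rfl : u = u')
    rw [snd_eq_of_mem_lsoFiber hp hij, snd_eq_of_mem_lsoFiber hp' hij]

lemma M_eq_sum_card_lsoFiber (k m : ℕ) :
    M k m = ∑ q ∈ Icc 1 m ×ˢ Icc 1 m, #(lsoFiber k m q.1 q.2) := by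
  refine card_eq_sum_card_fiberwise fun p hp => ?_
  simp only [coe_filter, mem_product, mem_Words, Set.mem_ofPred_eq, MutuallyBordered,
    isLeftBorder_iff_isRightBorder] at hp
  obtain ⟨⟨hu, hv⟩, hr, hl⟩ := hp
  obtain ⟨b, hb, -, hbl⟩ := exists_isRightBorder_unbordered_length_eq_lso hr
  obtain ⟨c, hc, -, hcl⟩ := exists_isRightBorder_unbordered_length_eq_lso hl
  have := List.length_pos_of_ne_nil hb.1
  have := List.length_pos_of_ne_nil hc.1
  have := hb.2.1.length_le
  have := hc.2.1.length_le
  simp only [coe_product, coe_Icc, Set.mem_prod, Set.mem_Icc]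
  omega

end Fibers

section Density

variable {k : ℕ}

noncomputable def ubSum (k n : ℕ) : ℝ := ∑ i ∈ Icc 1 n, (UB k i : ℝ) / (k : ℝ) ^ (2 * i)

lemma ubSum_nonneg (k n : ℕ) : 0 ≤ ubSum k n :=
  sum_nonneg fun _ _ => by positivity

lemma ubSum_mono (k : ℕ) : Monotone (ubSum k) := fun _ _ h =>
  sum_le_sum_of_subset_of_nonneg (Icc_subset_Icc_right h) fun _ _ _ => by positivity

lemma sq_ubSum (k n : ℕ) : ubSum k n ^ 2 = ∑ q ∈ Icc 1 n ×ˢ Icc 1 n,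
    (UB k q.1 : ℝ) / (k : ℝ) ^ (2 * q.1) * ((UB k q.2 : ℝ) / (k : ℝ) ^ (2 * q.2)) := by
  rw [sq, ubSum, sum_mul_sum, ← sum_product']

lemma UB_div_le (hk : k ≠ 0) (i : ℕ) : (UB k i : ℝ) / (k : ℝ) ^ (2 * i) ≤ (1 / (k : ℝ)) ^ i :=
  calc (UB k i : ℝ) / (k : ℝ) ^ (2 * i) ≤ (k : ℝ) ^ i / (k : ℝ) ^ (2 * i) := by
        gcongr; exact_mod_cast UB_le_pow k i
    _ = (1 / (k : ℝ)) ^ i := by rw [one_div_pow, two_mul, pow_add]; field_simp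

lemma ubSum_le_add (hk : 2 ≤ k) {n m : ℕ} (hnm : n ≤ m) :
    ubSum k m ≤ ubSum k n + 1 / (k : ℝ) ^ n / ((k : ℝ) - 1) := by
  have hk' : (2 : ℝ) ≤ k := by exact_mod_cast hk
  have hsplit : ubSum k m = ubSum k n +
      ∑ i ∈ Ico (n + 1) (m + 1), (UB k i : ℝ) / (k : ℝ) ^ (2 * i) := by
    rw [ubSum, ubSum, ← Ico_add_one_right_eq_Icc, ← Ico_add_one_right_eq_Icc,
      sum_Ico_consecutive _ (by omega) (by omega)]
  calc ubSum k m ≤ ubSum k n + ∑ i ∈ Ico (n + 1) (m + 1), (1 / (k : ℝ)) ^ i := by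
        rw [hsplit]; gcongr with i; exact UB_div_le (by omega) i
    _ ≤ ubSum k n + (1 / (k : ℝ)) ^ (n + 1) / (1 - 1 / k) := by
        gcongr
        exact geom_sum_Ico_le_of_lt_one (by positivity) (by rw [div_lt_one] <;> linarith)
    _ = ubSum k n + 1 / (k : ℝ) ^ n / ((k : ℝ) - 1) := by
        have : (k : ℝ) - 1 ≠ 0 := by linarith
        rw [one_div_pow, pow_succ]
        field_simp

lemma card_lsoFiber_div (hk : k ≠ 0) {m i j : ℕ} (hi : 1 ≤ i) (hj : 1 ≤ j) (hij : i + j ≤ m) :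
    (#(lsoFiber k m i j) : ℝ) / (k : ℝ) ^ (2 * m) =
      (UB k i : ℝ) / (k : ℝ) ^ (2 * i) * ((UB k j : ℝ) / (k : ℝ) ^ (2 * j)) := by
  have hm : 2 * m = 2 * i + 2 * j + (m - i - j) + (m - i - j) := by omega
  rw [card_lsoFiber hi hj hij, hm]
  push_cast
  simp only [pow_add]
  field_simp

lemma card_lsoFiber_div_le (hk : k ≠ 0) {m i j : ℕ} (hi : 1 ≤ i) (hj : 1 ≤ j) :
    (#(lsoFiber k m i j) : ℝ) / (k : ℝ) ^ (2 * m) ≤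
      (UB k i : ℝ) / (k : ℝ) ^ (2 * i) * ((UB k j : ℝ) / (k : ℝ) ^ (2 * j)) +
        (1 / (k : ℝ)) ^ m := by
  rcases le_or_gt (i + j) m with hij | hij
  · rw [card_lsoFiber_div hk hi hj hij]
    exact le_add_of_nonneg_right (by positivity)
  · refine le_add_of_nonneg_of_le (by positivity) ?_
    calc (#(lsoFiber k m i j) : ℝ) / (k : ℝ) ^ (2 * m) ≤ (k : ℝ) ^ m / (k : ℝ) ^ (2 * m) := by
          gcongr; exact_mod_cast card_lsoFiber_le hij.le
      _ = (1 / (k : ℝ)) ^ m := by rw [one_div_pow, two_mul, pow_add]; field_simp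

lemma sq_ubSum_le_M_div (hk : k ≠ 0) {h m : ℕ} (hm : 2 * h ≤ m) :
    ubSum k h ^ 2 ≤ (M k m : ℝ) / (k : ℝ) ^ (2 * m) := by
  rw [sq_ubSum, M_eq_sum_card_lsoFiber, Nat.cast_sum, sum_div]
  calc _ = ∑ q ∈ Icc 1 h ×ˢ Icc 1 h, (#(lsoFiber k m q.1 q.2) : ℝ) / (k : ℝ) ^ (2 * m) :=
        sum_congr rfl fun q hq => by
          simp only [mem_product, mem_Icc] at hq
          exact (card_lsoFiber_div hk hq.1.1 hq.2.1 (by omega)).symm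
    _ ≤ _ := sum_le_sum_of_subset_of_nonneg
        (product_subset_product (Icc_subset_Icc_right (by omega)) (Icc_subset_Icc_right (by omega)))
        fun _ _ _ => by positivity

lemma M_div_le (hk : k ≠ 0) (m : ℕ) :
    (M k m : ℝ) / (k : ℝ) ^ (2 * m) ≤ ubSum k m ^ 2 + (m : ℝ) ^ 2 * (1 / (k : ℝ)) ^ m := by
  rw [M_eq_sum_card_lsoFiber, Nat.cast_sum, sum_div, sq_ubSum]
  calc _ ≤ ∑ q ∈ Icc 1 m ×ˢ Icc 1 m, ((UB k q.1 : ℝ) / (k : ℝ) ^ (2 * q.1) *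
        ((UB k q.2 : ℝ) / (k : ℝ) ^ (2 * q.2)) + (1 / (k : ℝ)) ^ m) :=
        sum_le_sum fun q hq => by
          simp only [mem_product, mem_Icc] at hq
          exact card_lsoFiber_div_le hk hq.1.1 hq.2.1
    _ = _ := by
        rw [sum_add_distrib, sum_const, card_product, Nat.card_Icc, nsmul_eq_mul]
        push_cast
        ring

end Density

theorem stmt11 (k : ℕ) (hk : 2 ≤ k) :
    ∃ L : ℝ,
      Filter.Tendsto (fun n : ℕ => (M k n : ℝ) / (k : ℝ) ^ (2 * n)) Filter.atTop (nhds L) ∧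
      ∀ n : ℕ, 1 ≤ n →
        (∑ i ∈ Finset.Icc 1 n, (UB k i : ℝ) / (k : ℝ) ^ (2 * i)) ^ 2 ≤ L ∧
        L ≤ ((∑ i ∈ Finset.Icc 1 n, (UB k i : ℝ) / (k : ℝ) ^ (2 * i)) +
              (1 / (k : ℝ) ^ n) / ((k : ℝ) - 1)) ^ 2 := by
  have hk0 : k ≠ 0 := by omega
  have hbdd : BddAbove (Set.range (ubSum k)) := ⟨1 / ((k : ℝ) - 1), Set.forall_mem_range.2
    fun m => by simpa [ubSum] using ubSum_le_add hk m.zero_le⟩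
  obtain ⟨S, hS⟩ : ∃ S, Tendsto (ubSum k) atTop (𝓝 S) :=
    ⟨_, tendsto_atTop_ciSup (ubSum_mono k) hbdd⟩
  have hgeom : Tendsto (fun m : ℕ => (m : ℝ) ^ 2 * (1 / (k : ℝ)) ^ m) atTop (𝓝 0) :=
    tendsto_pow_const_mul_const_pow_of_abs_lt_one 2 <| by
      rw [abs_of_nonneg (by positivity), div_lt_one (by positivity)]
      exact_mod_cast hk
  have hM : Tendsto (fun m => (M k m : ℝ) / (k : ℝ) ^ (2 * m)) atTop (𝓝 (S ^ 2)) :=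
    tendsto_of_tendsto_of_tendsto_of_le_of_le
      ((hS.comp (Nat.tendsto_div_const_atTop two_ne_zero)).pow 2)
      (by simpa using (hS.pow 2).add hgeom)
      (fun m => sq_ubSum_le_M_div hk0 (Nat.mul_div_le m 2)) (M_div_le hk0)
  refine ⟨S ^ 2, hM, fun n _ => ⟨?_, ?_⟩⟩
  · exact pow_le_pow_left₀ (ubSum_nonneg k n) ((ubSum_mono k).ge_of_tendsto hS n) 2
  · exact pow_le_pow_left₀ ((ubSum_nonneg k 0).trans ((ubSum_mono k).ge_of_tendsto hS 0))
      (le_of_tendsto hS (eventually_atTop.2 ⟨n, fun m hm => ubSum_le_add hk hm⟩)) 2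
end

section
/- Let k ≥ 2. Then the limit lim_{n→∞} R_k(n)/k^{2n} exists. -/
open Classical Finset Filter

lemma mem_words {k n : ℕ} {w : List (Fin k)} : w ∈ Words k n ↔ w.length = n := by
  constructor
  · intro h
    simp only [Words, Finset.mem_image] at h
    obtain ⟨f, _, rfl⟩ := h
    simp
  · intro h
    subst h
    simp only [Words, Finset.mem_image]
    exact ⟨w.get, Finset.mem_univ _, List.ofFn_get w⟩

lemma card_words (k n : ℕ) : (Words k n).card = k ^ n := by
  rw [Words, Finset.card_image_of_injective _ List.ofFn_injective]
  simp

/-- `RBle k m u v`: there is a "match" of length `i ∈ [1, m]` between a suffix of `u`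
and a prefix of `v`. -/
def RBle (k m : ℕ) (u v : List (Fin k)) : Prop :=
  ∃ i, 1 ≤ i ∧ i ≤ m ∧ u.drop (u.length - i) = v.take i

lemma isLeftBorder_iff_swap {k : ℕ} {u v b : List (Fin k)} :
    IsLeftBorder u v b ↔ IsRightBorder v u b := by
  unfold IsLeftBorder IsRightBorder; tauto

lemma rb_of_match {k n : ℕ} {u v : List (Fin k)} (hu : u.length = n) (hv : v.length = n)
    {i : ℕ} (h1 : 1 ≤ i) (h2 : i < n) (hm : u.drop (n - i) = v.take i) :
    IsRightBorder u v (v.take i) := by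
  have hlen : (v.take i).length = i := by
    rw [List.length_take]; omega
  refine ⟨?_, ?_, ?_, List.take_prefix _ _, ?_⟩
  · intro h; rw [h] at hlen; simp at hlen; omega
  · rw [← hm, ← hu]; exact List.drop_suffix _ _
  · intro h; rw [h] at hlen; omega
  · intro h; rw [h] at hlen; omega

lemma match_of_rb {k n : ℕ} {u v b : List (Fin k)} (hu : u.length = n) (hv : v.length = n)
    (h : IsRightBorder u v b) :
    1 ≤ b.length ∧ b.length < n ∧ u.drop (n - b.length) = v.take b.length := by
  obtain ⟨hne, hsuf, hnu, hpre, hnv⟩ := h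
  have h1 : 1 ≤ b.length := by
    cases b with
    | nil => exact absurd rfl hne
    | cons a l => simp
  have hlt : b.length < n := by
    have hle := hsuf.length_le
    rcases lt_or_eq_of_le hle with h' | h'
    · omega
    · exact absurd (hsuf.eq_of_length (by omega)) hnu
  refine ⟨h1, hlt, ?_⟩
  have e1 : b = u.drop (u.length - b.length) := List.suffix_iff_eq_drop.mp hsuf
  rw [hu] at e1
  have e2 : b = v.take b.length := by
    rw [List.prefix_iff_eq_take] at hpre; exact hpre
  rw [← e1, ← e2]

lemma exists_rb_iff {k n : ℕ} {u v : List (Fin k)} (hu : u.length = n) (hv : v.length = n) :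
    (∃ b, IsRightBorder u v b) ↔ ∃ i, 1 ≤ i ∧ i < n ∧ u.drop (n - i) = v.take i := by
  constructor
  · rintro ⟨b, hb⟩
    obtain ⟨h1, h2, h3⟩ := match_of_rb hu hv hb
    exact ⟨b.length, h1, h2, h3⟩
  · rintro ⟨i, h1, h2, h3⟩
    exact ⟨v.take i, rb_of_match hu hv h1 h2 h3⟩

/-- `RBle` in terms of fixed length `n` (when `m < n`). -/
lemma rble_iff {k n m : ℕ} {u v : List (Fin k)} (hu : u.length = n) :
    RBle k m u v ↔ ∃ i, 1 ≤ i ∧ i ≤ m ∧ u.drop (n - i) = v.take i := by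
  unfold RBle; rw [hu]

-- block lemmas
lemma drop_block {k m i : ℕ} (x c : List (Fin k)) (hc : c.length = m) (hi : i ≤ m) :
    (x ++ c).drop ((x ++ c).length - i) = c.drop (m - i) := by
  have h : (x ++ c).length - i = x.length + (m - i) := by
    rw [List.length_append]; omega
  rw [h, ← List.drop_drop, List.drop_left' rfl]

lemma take_block {k m i : ℕ} (a y : List (Fin k)) (ha : a.length = m) (hi : i ≤ m) :
    (a ++ y).take i = a.take i := by
  rw [List.take_append]
  have : i - a.length = 0 := by omega
  rw [this]; simp

lemma rble_block {k m : ℕ} (x c a y : List (Fin k)) (hc : c.length = m) (ha : a.length = m) :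
    RBle k m (x ++ c) (a ++ y) ↔ RBle k m c a := by
  unfold RBle
  constructor
  · rintro ⟨i, h1, h2, h3⟩
    refine ⟨i, h1, h2, ?_⟩
    rw [drop_block x c hc h2, take_block a y ha h2] at h3
    rw [hc]; exact h3
  · rintro ⟨i, h1, h2, h3⟩
    refine ⟨i, h1, h2, ?_⟩
    rw [drop_block x c hc h2, take_block a y ha h2, ← hc]; exact h3

/-- quadruples ((a₁,c₁),(a₂,c₂)) of length-m words with the "good" pattern. -/
noncomputable def Dset (k m : ℕ) :
    Finset ((List (Fin k) × List (Fin k)) × (List (Fin k) × List (Fin k))) :=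
  ((Words k m ×ˢ Words k m) ×ˢ (Words k m ×ˢ Words k m)).filter
    (fun q => RBle k m q.1.2 q.2.1 ∧ ¬ RBle k m q.2.2 q.1.1)

lemma decomp_words {k m n : ℕ} (h : 2 * m ≤ n) {u : List (Fin k)} (hu : u.length = n) :
    u.take m ++ ((u.drop m).take (n - 2 * m) ++ u.drop (n - m)) = u := by
  have h1 : (u.drop m).drop (n - 2 * m) = u.drop (n - m) := by
    rw [List.drop_drop]
    congr 1; omega
  rw [← h1, List.take_append_drop, List.take_append_drop]

lemma middle_card_aux {k m n : ℕ} (h : 2 * m ≤ n) :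
    ((Words k n ×ˢ Words k n).filter
        (fun p => RBle k m p.1 p.2 ∧ ¬ RBle k m p.2 p.1)).card
      = (Dset k m).card * (k ^ (n - 2 * m)) ^ 2 := by
  classical
  have key : ((Dset k m) ×ˢ (Words k (n - 2 * m) ×ˢ Words k (n - 2 * m))).card
      = ((Words k n ×ˢ Words k n).filter
        (fun p => RBle k m p.1 p.2 ∧ ¬ RBle k m p.2 p.1)).card := by
    refine Finset.card_bij'
      (fun q _ => (q.1.1.1 ++ (q.2.1 ++ q.1.1.2), q.1.2.1 ++ (q.2.2 ++ q.1.2.2)))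
      (fun p _ => (((p.1.take m, p.1.drop (n - m)), (p.2.take m, p.2.drop (n - m))),
        ((p.1.drop m).take (n - 2 * m), (p.2.drop m).take (n - 2 * m))))
      ?hi ?hj ?li ?ri
    case hi =>
      rintro ⟨⟨⟨a1, c1⟩, ⟨a2, c2⟩⟩, ⟨b1, b2⟩⟩ hq
      simp only [Finset.mem_product, Dset, Finset.mem_filter] at hq
      obtain ⟨⟨⟨⟨ha1, hc1⟩, ⟨ha2, hc2⟩⟩, hP, hnP⟩, hb1, hb2⟩ := hq
      rw [mem_words] at ha1 hc1 ha2 hc2 hb1 hb2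
      simp only [Finset.mem_filter, Finset.mem_product, mem_words]
      refine ⟨⟨?_, ?_⟩, ?_, ?_⟩
      · simp only [List.length_append]; omega
      · simp only [List.length_append]; omega
      · rw [show a1 ++ (b1 ++ c1) = (a1 ++ b1) ++ c1 from (List.append_assoc _ _ _).symm,
          rble_block (a1 ++ b1) c1 a2 (b2 ++ c2) hc1 ha2]
        exact hP
      · rw [show a2 ++ (b2 ++ c2) = (a2 ++ b2) ++ c2 from (List.append_assoc _ _ _).symm,
          rble_block (a2 ++ b2) c2 a1 (b1 ++ c1) hc2 ha1]
        exact hnP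
    case hj =>
      rintro ⟨u, v⟩ hp
      simp only [Finset.mem_filter, Finset.mem_product, mem_words] at hp
      obtain ⟨⟨hu, hv⟩, hP, hnP⟩ := hp
      simp only [Finset.mem_product, Dset, Finset.mem_filter, mem_words]
      refine ⟨⟨⟨⟨?_, ?_⟩, ?_, ?_⟩, ?_, ?_⟩, ?_, ?_⟩
      · rw [List.length_take]; omega
      · rw [List.length_drop]; omega
      · rw [List.length_take]; omega
      · rw [List.length_drop]; omega
      · have h2 : RBle k m u v ↔ RBle k m (u.drop (n - m)) (v.take m) := by
          conv_lhs => rw [← List.take_append_drop (n - m) u, ← List.take_append_drop m v]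
          exact rble_block _ _ _ _ (by rw [List.length_drop, hu]; omega)
            (by rw [List.length_take, hv]; omega)
        exact h2.mp hP
      · intro hc
        apply hnP
        have h2 : RBle k m v u ↔ RBle k m (v.drop (n - m)) (u.take m) := by
          conv_lhs => rw [← List.take_append_drop (n - m) v, ← List.take_append_drop m u]
          exact rble_block _ _ _ _ (by rw [List.length_drop, hv]; omega)
            (by rw [List.length_take, hu]; omega)
        exact h2.mpr hc
      · rw [List.length_take, List.length_drop]; omega
      · rw [List.length_take, List.length_drop]; omega
    case li =>
      rintro ⟨⟨⟨a1, c1⟩, ⟨a2, c2⟩⟩, ⟨b1, b2⟩⟩ hq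
      simp only [Finset.mem_product, Dset, Finset.mem_filter] at hq
      obtain ⟨⟨⟨⟨ha1, hc1⟩, ⟨ha2, hc2⟩⟩, _, _⟩, hb1, hb2⟩ := hq
      rw [mem_words] at ha1 hc1 ha2 hc2 hb1 hb2
      have e1 : (a1 ++ (b1 ++ c1)).take m = a1 := List.take_left' ha1
      have e2 : (a1 ++ (b1 ++ c1)).drop (n - m) = c1 := by
        rw [show a1 ++ (b1 ++ c1) = (a1 ++ b1) ++ c1 from (List.append_assoc _ _ _).symm]
        apply List.drop_left'
        rw [List.length_append]; omega
      have e3 : ((a1 ++ (b1 ++ c1)).drop m).take (n - 2 * m) = b1 := by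
        rw [List.drop_left' ha1, List.take_left' hb1]
      have f1 : (a2 ++ (b2 ++ c2)).take m = a2 := List.take_left' ha2
      have f2 : (a2 ++ (b2 ++ c2)).drop (n - m) = c2 := by
        rw [show a2 ++ (b2 ++ c2) = (a2 ++ b2) ++ c2 from (List.append_assoc _ _ _).symm]
        apply List.drop_left'
        rw [List.length_append]; omega
      have f3 : ((a2 ++ (b2 ++ c2)).drop m).take (n - 2 * m) = b2 := by
        rw [List.drop_left' ha2, List.take_left' hb2]
      simp only [e1, e2, e3, f1, f2, f3]
    case ri =>
      rintro ⟨u, v⟩ hp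
      simp only [Finset.mem_filter, Finset.mem_product, mem_words] at hp
      obtain ⟨⟨hu, hv⟩, _, _⟩ := hp
      simp only [Prod.mk.injEq]
      exact ⟨decomp_words h hu, decomp_words h hv⟩
  rw [← key, Finset.card_product, Finset.card_product, card_words]
  ring

lemma myGeomSumLt {k : ℕ} (hk : 2 ≤ k) (t : ℕ) : ∑ j ∈ Finset.range t, k ^ j < k ^ t := by
  induction t with
  | zero => simp
  | succ t ih =>
    rw [Finset.sum_range_succ, pow_succ]
    have : k ^ t * 2 ≤ k ^ t * k := Nat.mul_le_mul_left _ hk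
    omega

lemma matchAt_card {k n : ℕ} (i : ℕ) (hi : i ≤ n) :
    ((Words k n ×ˢ Words k n).filter
        (fun p => p.1.drop (n - i) = p.2.take i)).card ≤ k ^ (2 * n - i) := by
  have h1 : ((Words k n ×ˢ Words k n).filter
        (fun p => p.1.drop (n - i) = p.2.take i)).card
      ≤ (Words k n ×ˢ Words k (n - i)).card := by
    apply Finset.card_le_card_of_injOn (fun p => (p.1, p.2.drop i))
    · rintro ⟨u, v⟩ hp
      simp only [Finset.mem_coe, Finset.mem_filter, Finset.mem_product, mem_words] at hp ⊢
      obtain ⟨⟨hu, hv⟩, _⟩ := hp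
      exact ⟨hu, by rw [List.length_drop, hv]⟩
    · rintro ⟨u, v⟩ hp ⟨u', v'⟩ hp' heq
      simp only [Finset.coe_filter, Set.mem_setOf_eq, Finset.mem_product, mem_words] at hp hp'
      obtain ⟨⟨hu, hv⟩, hm⟩ := hp
      obtain ⟨⟨hu', hv'⟩, hm'⟩ := hp'
      simp only [Prod.mk.injEq] at heq ⊢
      obtain ⟨h1, h2⟩ := heq
      refine ⟨h1, ?_⟩
      have : v.take i = v'.take i := by
        rw [← hm, ← hm', h1]
      calc v = v.take i ++ v.drop i := (List.take_append_drop _ _).symm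
        _ = v'.take i ++ v'.drop i := by rw [this, h2]
        _ = v' := List.take_append_drop _ _
  rw [Finset.card_product, card_words, card_words, ← pow_add] at h1
  have : n + (n - i) = 2 * n - i := by omega
  rwa [this] at h1

lemma tail_card {k m n : ℕ} (hk : 2 ≤ k) (hm : m ≤ n) :
    ((Words k n ×ˢ Words k n).filter
        (fun p => ∃ i, m < i ∧ i < n ∧ p.1.drop (n - i) = p.2.take i)).card
      ≤ k ^ (2 * n - m) := by
  classical
  have hsub : ((Words k n ×ˢ Words k n).filter
        (fun p => ∃ i, m < i ∧ i < n ∧ p.1.drop (n - i) = p.2.take i))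
      ⊆ (Finset.Ioo m n).biUnion (fun i =>
        (Words k n ×ˢ Words k n).filter (fun p => p.1.drop (n - i) = p.2.take i)) := by
    intro p hp
    simp only [Finset.mem_filter] at hp
    obtain ⟨hmem, i, h1, h2, h3⟩ := hp
    simp only [Finset.mem_biUnion, Finset.mem_Ioo, Finset.mem_filter]
    exact ⟨i, ⟨h1, h2⟩, hmem, h3⟩
  calc ((Words k n ×ˢ Words k n).filter _).card
      ≤ ((Finset.Ioo m n).biUnion (fun i =>
        (Words k n ×ˢ Words k n).filter (fun p => p.1.drop (n - i) = p.2.take i))).card :=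
        Finset.card_le_card hsub
    _ ≤ ∑ i ∈ Finset.Ioo m n, ((Words k n ×ˢ Words k n).filter
        (fun p => p.1.drop (n - i) = p.2.take i)).card := Finset.card_biUnion_le
    _ ≤ ∑ i ∈ Finset.Ioo m n, k ^ (2 * n - i) := by
        apply Finset.sum_le_sum
        intro i hi
        simp only [Finset.mem_Ioo] at hi
        exact matchAt_card i (by omega)
    _ = ∑ j ∈ (Finset.Ioo m n).image (fun i => 2 * n - i), k ^ j := by
        rw [Finset.sum_image]
        intro x hx y hy hxy
        simp only [Finset.mem_coe, Finset.mem_Ioo] at hx hy hxy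
        omega
    _ ≤ ∑ j ∈ Finset.range (2 * n - m), k ^ j := by
        apply Finset.sum_le_sum_of_subset
        intro j hj
        simp only [Finset.mem_image, Finset.mem_Ioo] at hj
        obtain ⟨i, ⟨h1, h2⟩, rfl⟩ := hj
        simp only [Finset.mem_range]
        omega
    _ ≤ k ^ (2 * n - m) := le_of_lt (myGeomSumLt hk _)

lemma subset_XY {k m n : ℕ} (hm : 1 ≤ m) (hn : 2 * m ≤ n) :
    ((Words k n ×ˢ Words k n).filter (fun p => RightBordered p.1 p.2))
      ⊆ ((Words k n ×ˢ Words k n).filter (fun p => RBle k m p.1 p.2 ∧ ¬ RBle k m p.2 p.1))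
        ∪ ((Words k n ×ˢ Words k n).filter
            (fun p => ∃ i, m < i ∧ i < n ∧ p.1.drop (n - i) = p.2.take i)) := by
  classical
  rintro ⟨u, v⟩ hp
  simp only [Finset.mem_filter, Finset.mem_product, mem_words] at hp
  obtain ⟨⟨hu, hv⟩, hR, hL⟩ := hp
  have hnRle : ¬ RBle k m v u := by
    intro hc
    obtain ⟨i, h1, h2, h3⟩ := (rble_iff hv).mp hc
    exact hL ⟨u.take i, isLeftBorder_iff_swap.mpr (rb_of_match hv hu h1 (by omega) h3)⟩
  simp only [Finset.mem_union, Finset.mem_filter, Finset.mem_product, mem_words]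
  by_cases hY : RBle k m u v
  · exact Or.inl ⟨⟨hu, hv⟩, hY, hnRle⟩
  · obtain ⟨i, h1, h2, h3⟩ := (exists_rb_iff hu hv).mp hR
    have : m < i := by
      by_contra hle
      exact hY ((rble_iff hu).mpr ⟨i, h1, by omega, h3⟩)
    exact Or.inr ⟨⟨hu, hv⟩, i, this, h2, h3⟩

lemma subset_YX {k m n : ℕ} (hm : 1 ≤ m) (hn : 2 * m ≤ n) :
    ((Words k n ×ˢ Words k n).filter (fun p => RBle k m p.1 p.2 ∧ ¬ RBle k m p.2 p.1))
      ⊆ ((Words k n ×ˢ Words k n).filter (fun p => RightBordered p.1 p.2))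
        ∪ ((Words k n ×ˢ Words k n).filter
            (fun p => ∃ i, m < i ∧ i < n ∧ p.2.drop (n - i) = p.1.take i)) := by
  classical
  rintro ⟨u, v⟩ hp
  simp only [Finset.mem_filter, Finset.mem_product, mem_words] at hp
  obtain ⟨⟨hu, hv⟩, hY, hnY⟩ := hp
  have hR : ∃ b, IsRightBorder u v b := by
    obtain ⟨i, h1, h2, h3⟩ := (rble_iff hu).mp hY
    exact ⟨v.take i, rb_of_match hu hv h1 (by omega) h3⟩
  simp only [Finset.mem_union, Finset.mem_filter, Finset.mem_product, mem_words]
  by_cases hL : ∃ b, IsLeftBorder u v b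
  · obtain ⟨b, hb⟩ := hL
    have hb' : IsRightBorder v u b := isLeftBorder_iff_swap.mp hb
    obtain ⟨j, h1, h2, h3⟩ := (exists_rb_iff hv hu).mp ⟨b, hb'⟩
    have : m < j := by
      by_contra hle
      exact hnY ((rble_iff hv).mpr ⟨j, h1, by omega, h3⟩)
    exact Or.inr ⟨⟨hu, hv⟩, j, this, h2, h3⟩
  · exact Or.inl ⟨⟨hu, hv⟩, hR, hL⟩

lemma tail_card' {k m n : ℕ} (hk : 2 ≤ k) (hm : m ≤ n) :
    ((Words k n ×ˢ Words k n).filter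
        (fun p => ∃ i, m < i ∧ i < n ∧ p.2.drop (n - i) = p.1.take i)).card
      ≤ k ^ (2 * n - m) := by
  classical
  refine le_trans (Finset.card_le_card_of_injOn (fun p => (p.2, p.1)) ?_ ?_) (tail_card hk hm)
  · rintro ⟨u, v⟩ hp
    simp only [Finset.mem_coe, Finset.mem_filter, Finset.mem_product] at hp ⊢
    tauto
  · rintro ⟨u, v⟩ _ ⟨u', v'⟩ _ heq
    simp only [Prod.mk.injEq] at heq ⊢
    tauto

lemma approx {k m n : ℕ} (hk : 2 ≤ k) (hm : 1 ≤ m) (hn : 2 * m ≤ n) :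
    |(R k n : ℝ) / (k : ℝ) ^ (2 * n) - ((Dset k m).card : ℝ) / (k : ℝ) ^ (4 * m)|
      ≤ 1 / (k : ℝ) ^ m := by
  classical
  set X := ((Words k n ×ˢ Words k n).filter (fun p => RightBordered p.1 p.2)) with hX
  set Y := ((Words k n ×ˢ Words k n).filter
      (fun p => RBle k m p.1 p.2 ∧ ¬ RBle k m p.2 p.1)) with hYdef
  have hmn : m ≤ n := by omega
  have hXle : X.card ≤ Y.card + k ^ (2 * n - m) :=
    calc X.card ≤ (Y ∪ _).card := Finset.card_le_card (subset_XY hm hn)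
      _ ≤ Y.card + _ := Finset.card_union_le _ _
      _ ≤ Y.card + k ^ (2 * n - m) := Nat.add_le_add_left (tail_card hk hmn) _
  have hYle : Y.card ≤ X.card + k ^ (2 * n - m) :=
    calc Y.card ≤ (X ∪ _).card := Finset.card_le_card (subset_YX hm hn)
      _ ≤ X.card + _ := Finset.card_union_le _ _
      _ ≤ X.card + k ^ (2 * n - m) := Nat.add_le_add_left (tail_card' hk hmn) _
  have hYcard : Y.card = (Dset k m).card * (k ^ (n - 2 * m)) ^ 2 := middle_card_aux hn
  have hk0 : (0 : ℝ) < (k : ℝ) := by exact_mod_cast (by omega : 0 < k)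
  have hp2n : (0 : ℝ) < (k : ℝ) ^ (2 * n) := pow_pos hk0 _
  have habs : |(X.card : ℝ) - (Y.card : ℝ)| ≤ (k : ℝ) ^ (2 * n - m) := by
    rw [abs_sub_le_iff]
    constructor
    · have : (X.card : ℝ) ≤ (Y.card : ℝ) + (k : ℝ) ^ (2 * n - m) := by exact_mod_cast hXle
      linarith
    · have : (Y.card : ℝ) ≤ (X.card : ℝ) + (k : ℝ) ^ (2 * n - m) := by exact_mod_cast hYle
      linarith
  have hYc : ((Dset k m).card : ℝ) / (k : ℝ) ^ (4 * m) = (Y.card : ℝ) / (k : ℝ) ^ (2 * n) := by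
    rw [div_eq_div_iff (by positivity) (ne_of_gt hp2n)]
    have hcast : (Y.card : ℝ) = ((Dset k m).card : ℝ) * ((k : ℝ) ^ (n - 2 * m)) ^ 2 := by
      rw [hYcard]; push_cast; ring
    rw [hcast, mul_assoc, ← pow_mul, ← pow_add]
    congr 2
    omega
  have hR : (R k n : ℝ) = (X.card : ℝ) := rfl
  have hpow : (k : ℝ) ^ (2 * n - m) / (k : ℝ) ^ (2 * n) = 1 / (k : ℝ) ^ m := by
    rw [div_eq_div_iff (ne_of_gt hp2n) (by positivity), ← pow_add, one_mul]
    congr 1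
    omega
  calc |(R k n : ℝ) / (k : ℝ) ^ (2 * n) - ((Dset k m).card : ℝ) / (k : ℝ) ^ (4 * m)|
      = |(X.card : ℝ) / (k : ℝ) ^ (2 * n) - (Y.card : ℝ) / (k : ℝ) ^ (2 * n)| := by
        rw [hR, hYc]
    _ = |(X.card : ℝ) - (Y.card : ℝ)| / (k : ℝ) ^ (2 * n) := by
        rw [div_sub_div_same, abs_div, abs_of_pos hp2n]
    _ ≤ (k : ℝ) ^ (2 * n - m) / (k : ℝ) ^ (2 * n) := by gcongr
    _ = 1 / (k : ℝ) ^ m := hpow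


theorem stmt14 (k : ℕ) (hk : 2 ≤ k) :
    ∃ L : ℝ,
      Filter.Tendsto (fun n : ℕ => (R k n : ℝ) / (k : ℝ) ^ (2 * n)) Filter.atTop (nhds L) := by
  apply cauchySeq_tendsto_of_complete
  rw [Metric.cauchySeq_iff']
  intro ε hε
  obtain ⟨m0, hm0⟩ := pow_unbounded_of_one_lt (R := ℝ) (2 / ε) one_lt_two
  set m := max m0 1 with hmdef
  have hm1 : 1 ≤ m := le_max_right _ _
  have h2m : (2 : ℝ) / ε < 2 ^ m :=
    lt_of_lt_of_le hm0 (pow_le_pow_right₀ one_le_two (le_max_left _ _))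
  have h2mpos : (0 : ℝ) < 2 ^ m := by positivity
  have hεm : 2 / (2 : ℝ) ^ m < ε := by
    rw [div_lt_iff₀ hε] at h2m
    rw [div_lt_iff₀ h2mpos]
    nlinarith
  have h2k : (2 : ℝ) ^ m ≤ (k : ℝ) ^ m := by
    apply pow_le_pow_left₀ (by norm_num)
    exact_mod_cast hk
  have hkm : (0 : ℝ) < (k : ℝ) ^ m := by
    have : (0 : ℝ) < (k : ℝ) := by exact_mod_cast (by omega : 0 < k)
    positivity
  refine ⟨2 * m, fun n hn => ?_⟩
  have h1 := approx (n := n) hk hm1 hn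
  have h2 := approx (n := 2 * m) hk hm1 (le_refl _)
  rw [Real.dist_eq]
  calc |(R k n : ℝ) / (k : ℝ) ^ (2 * n) - (R k (2 * m) : ℝ) / (k : ℝ) ^ (2 * (2 * m))|
      ≤ |(R k n : ℝ) / (k : ℝ) ^ (2 * n) - ((Dset k m).card : ℝ) / (k : ℝ) ^ (4 * m)|
        + |((Dset k m).card : ℝ) / (k : ℝ) ^ (4 * m)
            - (R k (2 * m) : ℝ) / (k : ℝ) ^ (2 * (2 * m))| := abs_sub_le _ _ _
    _ ≤ 1 / (k : ℝ) ^ m + 1 / (k : ℝ) ^ m := by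
        refine add_le_add h1 ?_
        rw [abs_sub_comm]
        exact h2
    _ = 2 / (k : ℝ) ^ m := by ring
    _ ≤ 2 / (2 : ℝ) ^ m := by
        apply div_le_div_of_nonneg_left (by norm_num) h2mpos h2k
    _ < ε := hεm
end
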